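/- arXiv:0911.1748 — 3 statements merged into one kernel-verified Lean document; each statement's English description precedes it below -/
import Mathlib

section
/- Let X be a topological space with a basis 𝒯 of open sets such that every element of 𝒯 is Lindelöf and 𝒯 is stable under finite unions and intersections. Let k be a field and let 0 → F' → F → F'' → 0 be a short exact sequence of sheaves of k-vector spaces on X with F' 𝒯-flabby (i.e., for all U, V ∈ 𝒯 with V ⊆ U the restriction Γ(U;F') → Γ(V;F') is surjective). Then for every open Lindelöf subset U of X, the map Γ(U;F) → Γ(U;F'') is surjective. -/
/-!
Cover `U` by countably many `Vₙ ∈ 𝒯` over each of which the section `s` of `F''` lifts to `F`,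
and put `Wₙ = V₀ ⊔ ⋯ ⊔ Vₙ ∈ 𝒯`. A lift `a` over `Wₙ` and a lift `b` over `Vₙ₊₁` differ on
`Wₙ ⊓ Vₙ₊₁` by a section of `F'`; by `𝒯`-flabbiness it extends to `Vₙ₊₁`, and correcting `b` by it
makes `a` and `b` glue to a lift over `Wₙ₊₁` extending `a`. The compatible sequence of lifts so
obtained glues to a lift over `U`.
-/
open CategoryTheory TopologicalSpace Opposite

/-- A subset is Lindelöf: every open cover has a countable subcover. -/
def LindelofSet {X : Type} [TopologicalSpace X] (s : Set X) : Prop :=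
  ∀ 𝒰 : Set (Set X), (∀ u ∈ 𝒰, IsOpen u) → s ⊆ ⋃₀ 𝒰 →
    ∃ 𝒱 ⊆ 𝒰, 𝒱.Countable ∧ s ⊆ ⋃₀ 𝒱

/-- A sheaf is `𝒯`-flabby if restrictions between nested members of `𝒯` are surjective. -/
def TFlabby {k : Type} [Field k] {X : TopCat.{0}} (𝒯 : Set (Opens X))
    (F : TopCat.Sheaf (ModuleCat.{0} k) X) : Prop :=
  ∀ U ∈ 𝒯, ∀ V ∈ 𝒯, ∀ h : V ≤ U, Function.Surjective (F.val.map (homOfLE h).op)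

open Limits
open scoped AlgebraicGeometry

universe u v

theorem exists_seq_of_forall_exists_succ {α : ℕ → Type*} {P : ∀ n, α n → Prop}
    {R : ∀ n, α n → α (n + 1) → Prop} (h0 : ∃ a, P 0 a)
    (hsucc : ∀ n a, P n a → ∃ b, P (n + 1) b ∧ R n a b) :
    ∃ f : ∀ n, α n, ∀ n, P n (f n) ∧ R n (f n) (f (n + 1)) := by
  choose next hnext using fun n (a : {a // P n a}) => hsucc n a a.2
  let g : ∀ n, {a // P n a} := fun n =>
    Nat.rec ⟨h0.choose, h0.choose_spec⟩ (fun n a => ⟨next n a, (hnext n a).1⟩) n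
  exact ⟨fun n => (g n).1, fun n => ⟨(g n).2, (hnext n (g n)).2⟩⟩

theorem LindelofSet.eq_bot_or_exists_seq_cover {X : Type} [TopologicalSpace X] {U : Opens X}
    (hU : LindelofSet (U : Set X)) {P : Opens X → Prop} (hP : ∀ x ∈ U, ∃ V, P V ∧ x ∈ V) :
    U = ⊥ ∨ ∃ e : ℕ → Opens X, (∀ n, P (e n)) ∧ U ≤ iSup e := by
  obtain ⟨𝒱, h𝒱P, h𝒱, hU𝒱⟩ := hU (SetLike.coe '' {V | P V}) (by rintro _ ⟨V, -, rfl⟩; exact V.2)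
    fun x hx => by
      obtain ⟨V, hV, hxV⟩ := hP x hx
      exact ⟨V, ⟨V, hV, rfl⟩, hxV⟩
  rcases 𝒱.eq_empty_or_nonempty with rfl | hne
  · left
    exact eq_bot_iff.mpr fun x hx => by simpa using hU𝒱 hx
  obtain ⟨f, rfl⟩ := h𝒱.exists_eq_range hne
  choose e he hef using fun n => h𝒱P (Set.mem_range_self n)
  refine Or.inr ⟨e, he, fun x hx => ?_⟩
  obtain ⟨_, ⟨n, rfl⟩, hxn⟩ := hU𝒱 hx
  exact Opens.mem_iSup.mpr ⟨n, by rwa [← hef n] at hxn⟩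

namespace TopCat.Presheaf

section Stalks

variable {C : Type u} [Category.{v} C] {FC : C → C → Type*} {CC : C → Type v}
  [∀ X Y, FunLike (FC X Y) (CC X) (CC Y)] [ConcreteCategory C FC] [HasColimits C]
  [PreservesFilteredColimits (CategoryTheory.forget C)] {X : TopCat.{v}}

theorem exists_app_eq_restrict_of_germ_mem_range {F G : Presheaf C X} (f : F ⟶ G)
    {U : Opens X} (t : ToType (G.obj (op U))) {x : X} (hx : x ∈ U)
    (h : G.germ U x hx t ∈ Set.range ((stalkFunctor C x).map f)) :
    ∃ V, ∃ hVU : V ≤ U, x ∈ V ∧ ∃ s, f.app (op V) s = restrictOpen t V hVU := by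
  obtain ⟨σ, hσ⟩ := h
  obtain ⟨W, hxW, s, rfl⟩ := F.exists_germ_eq σ
  rw [stalkFunctor_map_germ_apply] at hσ
  obtain ⟨V, hxV, iVW, iVU, he⟩ := G.germ_eq x hxW hx _ _ hσ
  exact ⟨V, iVU.le, hxV, F.map iVW.op s, (map_restrict f iVW.le s).trans he⟩

theorem exists_mem_app_eq_restrict_of_germ_mem_range {B : Set (Opens X)} (hB : Opens.IsBasis B)
    {F G : Presheaf C X} (f : F ⟶ G)
    {U : Opens X} (t : ToType (G.obj (op U))) {x : X} (hx : x ∈ U)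
    (h : G.germ U x hx t ∈ Set.range ((stalkFunctor C x).map f)) :
    ∃ V ∈ B, ∃ hVU : V ≤ U, x ∈ V ∧ ∃ s, f.app (op V) s = restrictOpen t V hVU := by
  obtain ⟨V, hVU, hxV, s, hs⟩ := exists_app_eq_restrict_of_germ_mem_range f t hx h
  obtain ⟨V', hV'B, hxV', hV'V⟩ := Opens.isBasis_iff_nbhd.mp hB hxV
  exact ⟨V', hV'B, hV'V.trans hVU, hxV', restrictOpen s V' hV'V,
    by rw [map_restrict, hs, restrict_restrict]⟩

end Stalks

variable {R : Type u} [Ring R] {X : TopCat.{u}} {F : Presheaf (ModuleCat.{u} R) X} {U V : Opens X}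

theorem restrictOpen_add (h : V ≤ U) (s t : ToType (F.obj (op U))) :
    restrictOpen (s + t) V h = restrictOpen s V h + restrictOpen t V h :=
  map_add (F.map (homOfLE h).op).hom s t

end TopCat.Presheaf

namespace TopCat.Sheaf

open Presheaf

section Gluing

variable {C : Type u} [Category.{v} C] {FC : C → C → Type*} {CC : C → Type v}
  [∀ X Y, FunLike (FC X Y) (CC X) (CC Y)] [ConcreteCategory C FC] [HasLimits C]
  [(CategoryTheory.forget C).ReflectsIsomorphisms] [PreservesLimits (CategoryTheory.forget C)]
  {X : TopCat.{v}}

theorem subsingleton_obj_of_eq_bot (F : Sheaf C X) {U : Opens X} (hU : U = ⊥) :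
    Subsingleton (ToType (F.obj.obj (op U))) :=
  ⟨fun s t => F.eq_of_locally_eq' (fun i : Empty => i.elim) U (fun i => i.elim)
    (by simp [hU]) s t (fun i => i.elim)⟩

theorem exists_restrict_eq_of_restrict_inf_eq (F : Sheaf C X) {A B : Opens X}
    (a : ToType (F.obj.obj (op A))) (b : ToType (F.obj.obj (op B)))
    (h : a |_ (A ⊓ B) = b |_ (A ⊓ B)) :
    ∃ s : ToType (F.obj.obj (op (A ⊔ B))), s |_ A = a ∧ s |_ B = b := by
  let W : Bool → Opens X := fun i => if i then A else B
  let sf : ∀ i, ToType (F.obj.obj (op (W i))) := fun i => match i with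
    | true => a
    | false => b
  obtain ⟨s, hs, -⟩ := F.existsUnique_gluing' W (A ⊔ B)
    (fun i => homOfLE (by cases i <;> simp [W])) (by simp [W, iSup_bool_eq])
    sf (by
      rintro (_ | _) (_ | _)
      · rfl
      · have := congr(restrictOpen $h (B ⊓ A) (inf_comm B A).le)
        simp only [restrict_restrict] at this
        exact this.symm
      · exact h
      · rfl)
  exact ⟨s, hs true, hs false⟩

theorem exists_restrict_eq_of_monotone (F : Sheaf C X) {W : ℕ → Opens X} (hW : Monotone W)
    {V : Opens X} (hWV : ∀ n, W n ≤ V) (hV : V ≤ iSup W) (t : ∀ n, ToType (F.obj.obj (op (W n))))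
    (ht : ∀ n, restrictOpen (t (n + 1)) (W n) (hW n.le_succ) = t n) :
    ∃ s : ToType (F.obj.obj (op V)), ∀ n, restrictOpen s (W n) (hWV n) = t n := by
  have restrict_eq : ∀ m n (hmn : m ≤ n), restrictOpen (t n) (W m) (hW hmn) = t m := by
    intro m n hmn
    induction n, hmn using Nat.le_induction with
    | base => exact restrict_self _
    | succ n hmn ih =>
      rw [← ih, ← ht n, restrict_restrict]
  obtain ⟨s, hs, -⟩ := F.existsUnique_gluing' W V (fun n => homOfLE (hWV n)) hV t (by
    intro m n
    change restrictOpen (t m) _ inf_le_left = restrictOpen (t n) _ inf_le_right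
    rcases le_total m n with hmn | hmn
    · rw [← restrict_eq m n hmn, restrict_restrict]
    · rw [← restrict_eq n m hmn, restrict_restrict])
  exact ⟨s, hs⟩

theorem exists_app_eq_of_monotone_cover {F G : Sheaf C X} (f : F ⟶ G) {U : Opens X}
    (s : ToType (G.obj.obj (op U))) {W : ℕ → Opens X} (hW : Monotone W) (hWU : ∀ n, W n ≤ U)
    (hU : U ≤ iSup W) (h0 : ∃ t, f.hom.app (op (W 0)) t = restrictOpen s (W 0) (hWU 0))
    (hsucc : ∀ n t, f.hom.app (op (W n)) t = restrictOpen s (W n) (hWU n) →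
      ∃ t', f.hom.app (op (W (n + 1))) t' = restrictOpen s (W (n + 1)) (hWU (n + 1)) ∧
        restrictOpen t' (W n) (hW n.le_succ) = t) :
    ∃ t, f.hom.app (op U) t = s := by
  obtain ⟨t, ht⟩ := exists_seq_of_forall_exists_succ h0 hsucc
  obtain ⟨t', ht'⟩ := F.exists_restrict_eq_of_monotone hW hWU hU t (fun n => (ht n).2)
  refine ⟨t', G.eq_of_locally_eq' W U (fun n => homOfLE (hWU n)) hU _ _ fun n => ?_⟩
  change restrictOpen (f.hom.app _ t') _ (hWU n) = restrictOpen s _ (hWU n)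
  rw [← map_restrict, ht', (ht n).1]

variable [HasColimits C] [PreservesFilteredColimits (CategoryTheory.forget C)]

theorem exists_app_eq_of_forall_exists_app_eq_restrict {F G : Sheaf C X} (f : F ⟶ G)
    (hf : ∀ x, Function.Injective ((stalkFunctor C x).map f.hom)) {U : Opens X}
    (t : ToType (G.obj.obj (op U)))
    (ht : ∀ x ∈ U, ∃ V, ∃ hVU : V ≤ U, x ∈ V ∧ ∃ s, f.hom.app (op V) s = restrictOpen t V hVU) :
    ∃ s, f.hom.app (op U) s = t := by
  choose V hVU hxV s hs using fun x : U => ht x x.2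
  have hcover : U ≤ iSup V := fun x hx => Opens.mem_iSup.mpr ⟨⟨x, hx⟩, hxV ⟨x, hx⟩⟩
  obtain ⟨s', hs', -⟩ := F.existsUnique_gluing' V U (fun x => homOfLE (hVU x)) hcover s (by
    intro x y
    apply app_injective_of_stalkFunctor_map_injective f.hom _ fun z _ => hf z
    change f.hom.app _ (restrictOpen (s x) _ inf_le_left) =
      f.hom.app _ (restrictOpen (s y) _ inf_le_right)
    rw [map_restrict, map_restrict, hs, hs, restrict_restrict, restrict_restrict])
  refine ⟨s', G.eq_of_locally_eq' V U (fun x => homOfLE (hVU x)) hcover _ _ fun x => ?_⟩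
  change restrictOpen (f.hom.app _ s') _ (hVU x) = restrictOpen t _ (hVU x)
  rw [← map_restrict, ← hs x]
  exact congrArg _ (hs' x)

end Gluing

variable {R : Type u} [Ring R] {X : TopCat.{u}} {F' F F'' : Sheaf (ModuleCat.{u} R) X}
  {α : F' ⟶ F} {β : F ⟶ F''}

theorem app_app_eq_zero_of_range_eq_ker
    (hexact : ∀ x : X,
      LinearMap.range ((stalkFunctor (ModuleCat R) x).map α.hom).hom
        = LinearMap.ker ((stalkFunctor (ModuleCat R) x).map β.hom).hom)
    {V : Opens X} (s : ToType (F'.obj.obj (op V))) :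
    β.hom.app (op V) (α.hom.app (op V) s) = 0 := by
  refine section_ext F'' V _ _ fun x hx => ?_
  rw [map_zero, ← stalkFunctor_map_germ_apply, ← stalkFunctor_map_germ_apply]
  have hker : _ ∈ LinearMap.ker ((stalkFunctor (ModuleCat R) x).map β.hom).hom :=
    hexact x ▸ LinearMap.mem_range_self _ (F'.presheaf.germ V x hx s)
  exact hker

theorem exists_app_eq_of_app_eq_zero
    (hinj : ∀ x : X, Function.Injective ((stalkFunctor (ModuleCat R) x).map α.hom))
    (hexact : ∀ x : X,
      LinearMap.range ((stalkFunctor (ModuleCat R) x).map α.hom).hom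
        = LinearMap.ker ((stalkFunctor (ModuleCat R) x).map β.hom).hom)
    {V : Opens X} {t : ToType (F.obj.obj (op V))} (ht : β.hom.app (op V) t = 0) :
    ∃ s, α.hom.app (op V) s = t := by
  refine exists_app_eq_of_forall_exists_app_eq_restrict α hinj t fun x hx =>
    exists_app_eq_restrict_of_germ_mem_range α.hom t hx ?_
  change _ ∈ LinearMap.range _
  rw [hexact x]
  change (stalkFunctor (ModuleCat R) x).map β.hom (F.presheaf.germ V x hx t) = 0
  rw [stalkFunctor_map_germ_apply, ht, map_zero]
  rfl

theorem exists_app_eq_restrict_sup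
    (hinj : ∀ x : X, Function.Injective ((stalkFunctor (ModuleCat R) x).map α.hom))
    (hexact : ∀ x : X,
      LinearMap.range ((stalkFunctor (ModuleCat R) x).map α.hom).hom
        = LinearMap.ker ((stalkFunctor (ModuleCat R) x).map β.hom).hom)
    {U A B : Opens X} (hAU : A ≤ U) (hBU : B ≤ U) (s : ToType (F''.obj.obj (op U)))
    (hsurj : Function.Surjective (F'.obj.map (homOfLE (inf_le_right : A ⊓ B ≤ B)).op))
    {a : ToType (F.obj.obj (op A))} (ha : β.hom.app (op A) a = restrictOpen s A hAU)
    {b : ToType (F.obj.obj (op B))} (hb : β.hom.app (op B) b = restrictOpen s B hBU) :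
    ∃ c : ToType (F.obj.obj (op (A ⊔ B))),
      β.hom.app _ c = restrictOpen s (A ⊔ B) (sup_le hAU hBU) ∧ c |_ A = a := by
  obtain ⟨d, hd⟩ := exists_app_eq_of_app_eq_zero hinj hexact
    (t := a |_ (A ⊓ B) - b |_ (A ⊓ B)) (by
      rw [map_sub, map_restrict, map_restrict, ha, hb, restrict_restrict, restrict_restrict,
        sub_self])
  obtain ⟨d, rfl⟩ := hsurj d
  obtain ⟨c, hca, hcb⟩ := F.exists_restrict_eq_of_restrict_inf_eq a (b + α.hom.app (op B) d) (by
    rw [restrictOpen_add, ← map_restrict]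
    exact (add_sub_cancel _ _).symm.trans (congrArg _ hd.symm))
  refine ⟨c, F''.eq_of_locally_eq₂ (homOfLE le_sup_left) (homOfLE le_sup_right) le_rfl _ _
    ?_ ?_, hca⟩
  · change restrictOpen _ A le_sup_left = restrictOpen _ A le_sup_left
    rw [← map_restrict, hca, ha, restrict_restrict]
  · change restrictOpen _ B le_sup_right = restrictOpen _ B le_sup_right
    rw [← map_restrict, hcb, map_add, hb, app_app_eq_zero_of_range_eq_ker hexact, add_zero,
      restrict_restrict]

end TopCat.Sheaf

open TopCat.Sheaf TopCat.Presheaf in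
theorem stmt0_general {k : Type} [Field k] {X : TopCat.{0}} (𝒯 : Set (Opens X))
    -- 𝒯 is a basis of the topology:
    (hbasis : ∀ U : Opens X, ∃ S ⊆ 𝒯, U = sSup S)
    -- 𝒯 is stable under finite unions and intersections:
    (hunion : ∀ U ∈ 𝒯, ∀ V ∈ 𝒯, U ⊔ V ∈ 𝒯)
    (hinter : ∀ U ∈ 𝒯, ∀ V ∈ 𝒯, U ⊓ V ∈ 𝒯)
    -- a short exact sequence 0 → F' → F → F'' → 0 of sheaves of k-vector spaces:
    (F' F F'' : TopCat.Sheaf (ModuleCat.{0} k) X) (α : F' ⟶ F) (β : F ⟶ F'')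
    (hinj : ∀ x : ↑X,
      Function.Injective ((TopCat.Presheaf.stalkFunctor (ModuleCat k) x).map α.hom))
    (hexact : ∀ x : ↑X,
      LinearMap.range ((TopCat.Presheaf.stalkFunctor (ModuleCat k) x).map α.hom).hom
        = LinearMap.ker ((TopCat.Presheaf.stalkFunctor (ModuleCat k) x).map β.hom).hom)
    (hsurj : ∀ x : ↑X,
      Function.Surjective ((TopCat.Presheaf.stalkFunctor (ModuleCat k) x).map β.hom))
    -- F' is 𝒯-flabby:
    (hflabby : TFlabby 𝒯 F')
    -- U is an open Lindelöf subset: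
    (U : Opens X) (hU : LindelofSet U.carrier) :
    Function.Surjective (β.hom.app (op U)) := by
  intro s
  have hlocal : ∀ x ∈ U, ∃ V, (V ∈ 𝒯 ∧ ∃ hVU : V ≤ U, ∃ t,
      β.hom.app (op V) t = restrictOpen s V hVU) ∧ x ∈ V := fun x hx => by
    obtain ⟨V, hV𝒯, hVU, hxV, t, ht⟩ := exists_mem_app_eq_restrict_of_germ_mem_range
      (Opens.isBasis_iff_cover.mpr hbasis) β.hom s hx (hsurj x _)
    exact ⟨V, ⟨hV𝒯, hVU, t, ht⟩, hxV⟩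
  rcases hU.eq_bot_or_exists_seq_cover hlocal with hUbot | ⟨e, he, hUe⟩
  · exact ⟨0, (F''.subsingleton_obj_of_eq_bot hUbot).elim _ _⟩
  choose he𝒯 heU t ht using he
  have hW𝒯 (n : ℕ) : partialSups e n ∈ 𝒯 := by
    rw [partialSups_eq_sup'_range]
    exact Finset.sup'_mem 𝒯 hunion _ _ _ fun i _ => he𝒯 i
  have hWU (n : ℕ) : partialSups e n ≤ U := partialSups_le e n U fun m _ => heU m
  refine exists_app_eq_of_monotone_cover β s (partialSups e).monotone hWU
    (hUe.trans (iSup_mono (le_partialSups e))) ?_ fun n a ha => ?_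
  · exact ⟨restrictOpen (t 0) _ (partialSups_zero e).le,
      by rw [map_restrict, ht 0, restrict_restrict]⟩
  · obtain ⟨c, hc, hca⟩ := exists_app_eq_restrict_sup hinj hexact (hWU n) (heU (n + 1)) s
      (hflabby _ (he𝒯 _) _ (hinter _ (hW𝒯 n) _ (he𝒯 _)) inf_le_right) ha (ht (n + 1))
    have hle : partialSups e (n + 1) ≤ partialSups e n ⊔ e (n + 1) :=
      (partialSups_succ e n).le
    exact ⟨restrictOpen c _ hle, by rw [map_restrict, hc, restrict_restrict],
      by rw [restrict_restrict, hca]⟩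

theorem stmt0 {k : Type} [Field k] {X : TopCat.{0}} (𝒯 : Set (Opens X))
    -- 𝒯 is a basis of the topology:
    (hbasis : ∀ U : Opens X, ∃ S ⊆ 𝒯, U = sSup S)
    -- every element of 𝒯 is Lindelöf:
    (hLind : ∀ U ∈ 𝒯, LindelofSet (U : Opens ↑X).carrier)
    -- 𝒯 is stable under finite unions and intersections:
    (hunion : ∀ U ∈ 𝒯, ∀ V ∈ 𝒯, U ⊔ V ∈ 𝒯)
    (hinter : ∀ U ∈ 𝒯, ∀ V ∈ 𝒯, U ⊓ V ∈ 𝒯)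
    -- a short exact sequence 0 → F' → F → F'' → 0 of sheaves of k-vector spaces:
    (F' F F'' : TopCat.Sheaf (ModuleCat.{0} k) X) (α : F' ⟶ F) (β : F ⟶ F'')
    (hinj : ∀ x : ↑X,
      Function.Injective ((TopCat.Presheaf.stalkFunctor (ModuleCat k) x).map α.hom))
    (hexact : ∀ x : ↑X,
      LinearMap.range ((TopCat.Presheaf.stalkFunctor (ModuleCat k) x).map α.hom).hom
        = LinearMap.ker ((TopCat.Presheaf.stalkFunctor (ModuleCat k) x).map β.hom).hom)
    (hsurj : ∀ x : ↑X,
      Function.Surjective ((TopCat.Presheaf.stalkFunctor (ModuleCat k) x).map β.hom))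
    -- F' is 𝒯-flabby:
    (hflabby : TFlabby 𝒯 F')
    -- U is an open Lindelöf subset:
    (U : Opens X) (hU : LindelofSet U.carrier) :
    Function.Surjective (β.hom.app (op U)) :=
  stmt0_general 𝒯 hbasis hunion hinter F' F F'' α β hinj hexact hsurj hflabby U hU
end

section
/- Let X be a topological space with a basis 𝒯 of open sets, each Lindelöf, stable under finite unions and intersections, and let k be a field. If 0 → F' → F → F'' → 0 is a short exact sequence of sheaves of k-vector spaces on X with F' 𝒯-flabby, then F is 𝒯-flabby if and only if F'' is 𝒯-flabby. -/
open CategoryTheory TopologicalSpace Opposite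

/-! The heart of the proof is that `β` is surjective on sections over every Lindelöf open `U`.
Stalkwise surjectivity gives lifts of a section of `F''` locally, on members of `𝒯`, and countably
many of them, `V₀, V₁, …`, cover `U`. The partial unions `Uₙ` lie in `𝒯`, and a lift on `Uₙ`
extends to `Uₙ₊₁`: on `Uₙ ∩ Vₙ₊₁` it differs from the lift on `Vₙ₊₁` by a section of `F'`, which
extends to `Vₙ₊₁` by `𝒯`-flabbiness of `F'`; corrected by it, the lift on `Vₙ₊₁` glues with the one
on `Uₙ`. The resulting compatible lifts glue to a lift on `U`.

Once `β` is surjective over members of `𝒯`, both implications are diagram chases. -/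

open AlgebraicGeometry TopCat.Presheaf

universe u v w

namespace TopCat.Sheaf

variable {C : Type u} [Category.{v} C] {FC : C → C → Type*} {CC : C → Type*}
  [∀ X Y, FunLike (FC X Y) (CC X) (CC Y)] [ConcreteCategory C FC]
  [Limits.HasLimitsOfSize.{w, w} C] [(CategoryTheory.forget C).ReflectsIsomorphisms]
  [Limits.PreservesLimitsOfSize.{w, w} (CategoryTheory.forget C)]
  {X : TopCat.{w}} (F : TopCat.Sheaf C X)

theorem eq_of_eq_bot {U : Opens X} (hU : U = ⊥) (s t : ToType (F.presheaf.obj (op U))) :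
    s = t :=
  F.eq_of_locally_eq' (U := (Empty.elim : Empty → Opens X)) U (fun i => i.elim)
    (hU ▸ bot_le) s t (fun i => i.elim)

theorem exists_restrict_eq_of_sup {A B : Opens X} (a : ToType (F.presheaf.obj (op A)))
    (b : ToType (F.presheaf.obj (op B))) (h : a |_ (A ⊓ B) = b |_ (A ⊓ B)) :
    ∃ s : ToType (F.presheaf.obj (op (A ⊔ B))), s |_ A = a ∧ s |_ B = b := by
  let U : Bool → Opens X := fun i => cond i A B
  let sf : ∀ i, ToType (F.presheaf.obj (op (U i))) := fun i => match i with
    | true => a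
    | false => b
  have hcompat : IsCompatible F.presheaf U sf := by
    rintro (_ | _) (_ | _)
    · rfl
    · have := congrArg (fun x => restrictOpen x (B ⊓ A) (inf_comm B A).le) h
      simp only [restrict_restrict] at this
      exact this.symm
    · exact h
    · rfl
  obtain ⟨s, hs, -⟩ := F.existsUnique_gluing' U (A ⊔ B)
    (fun i => homOfLE (by cases i <;> simp [U])) (sup_le (le_iSup U true) (le_iSup U false))
    sf hcompat
  exact ⟨s, hs true, hs false⟩

theorem exists_restrict_eq_of_monotone_s1 {U : ℕ → Opens X} (hU : Monotone U)
    (g : ∀ n, ToType (F.presheaf.obj (op (U n))))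
    (hg : ∀ n, restrictOpen (g (n + 1)) (U n) (hU n.le_succ) = g n) :
    ∃ s : ToType (F.presheaf.obj (op (iSup U))),
      ∀ n, restrictOpen s (U n) (le_iSup U n) = g n := by
  have chain : ∀ m n (h : m ≤ n), restrictOpen (g n) (U m) (hU h) = g m := by
    intro m n h
    induction n, h using Nat.le_induction with
    | base => exact restrict_self _
    | succ n hmn ih => rw [← restrict_restrict (hU hmn) (hU n.le_succ), hg, ih]
  have hcompat : IsCompatible F.presheaf U g := by
    intro i j
    change restrictOpen (g i) _ inf_le_left = restrictOpen (g j) _ inf_le_right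
    rw [← chain i (max i j) (le_max_left i j), ← chain j (max i j) (le_max_right i j),
      restrict_restrict, restrict_restrict]
  obtain ⟨s, hs, -⟩ := F.existsUnique_gluing U g hcompat
  exact ⟨s, hs⟩

theorem exists_app_eq_of_locally {G : TopCat.Sheaf C X} (f : F ⟶ G)
    (hf : ∀ W : Opens X, Function.Injective (f.hom.app (op W))) {V : Opens X}
    (t : ToType (G.presheaf.obj (op V)))
    (ht : ∀ x ∈ V, ∃ W : Opens X, ∃ (_ : x ∈ W) (hWV : W ≤ V) (s : ToType (F.presheaf.obj (op W))),
      f.hom.app (op W) s = restrictOpen t W hWV) :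
    ∃ s, f.hom.app (op V) s = t := by
  choose W hxW hWV s hs using fun x : V => ht x.1 x.2
  have hcov : V ≤ iSup W := fun x hx => Opens.mem_iSup.2 ⟨⟨x, hx⟩, hxW _⟩
  have hcompat : IsCompatible F.presheaf W s := by
    intro i j
    apply hf
    change f.hom.app _ (restrictOpen (s i) _ inf_le_left)
      = f.hom.app _ (restrictOpen (s j) _ inf_le_right)
    rw [map_restrict, map_restrict, hs, hs, restrict_restrict, restrict_restrict]
  obtain ⟨s₀, hs₀, -⟩ := F.existsUnique_gluing' W V (fun i => homOfLE (hWV i)) hcov s hcompat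
  refine ⟨s₀, G.eq_of_locally_eq' W V (fun i => homOfLE (hWV i)) hcov _ _ fun i => ?_⟩
  change restrictOpen _ _ (hWV i) = restrictOpen _ _ (hWV i)
  rw [← map_restrict, ← hs i]
  exact congrArg _ (hs₀ i)

theorem exists_app_eq_of_monotone {G : TopCat.Sheaf C X} (f : F ⟶ G) {U : ℕ → Opens X}
    (hU : Monotone U) {W : Opens X} (hUW : ∀ n, U n ≤ W) (hWU : W ≤ iSup U)
    (t : ToType (G.presheaf.obj (op W)))
    (h0 : ∃ s, f.hom.app (op (U 0)) s = restrictOpen t (U 0) (hUW 0))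
    (hstep : ∀ n s, f.hom.app (op (U n)) s = restrictOpen t (U n) (hUW n) →
      ∃ s', f.hom.app (op (U (n + 1))) s' = restrictOpen t (U (n + 1)) (hUW (n + 1)) ∧
        restrictOpen s' (U n) (hU n.le_succ) = s) :
    ∃ s, f.hom.app (op W) s = t := by
  choose next hnext_lift hnext_res using hstep
  let lifts : ∀ n, {s // f.hom.app (op (U n)) s = restrictOpen t (U n) (hUW n)} :=
    fun n => Nat.rec ⟨h0.choose, h0.choose_spec⟩
      (fun m s => ⟨next m s.1 s.2, hnext_lift m s.1 s.2⟩) n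
  obtain ⟨s, hs⟩ := F.exists_restrict_eq_of_monotone_s1 hU (fun n => (lifts n).1)
    (fun n => hnext_res n _ _)
  refine ⟨restrictOpen s W hWU,
    G.eq_of_locally_eq' U W (fun n => homOfLE (hUW n)) hWU _ _ fun n => ?_⟩
  change restrictOpen _ _ (hUW n) = restrictOpen _ _ (hUW n)
  rw [← map_restrict, restrict_restrict, hs n]
  exact (lifts n).2

end TopCat.Sheaf

theorem LindelofSet.exists_seq_cover {X : Type} [TopologicalSpace X] {s : Set X}
    (hs : LindelofSet s) (hne : s.Nonempty) {P : Opens X → Prop}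
    (h : ∀ x ∈ s, ∃ W : Opens X, P W ∧ x ∈ W) :
    ∃ V : ℕ → Opens X, (∀ n, P (V n)) ∧ s ⊆ ⋃ n, (V n : Set X) := by
  obtain ⟨𝒱, h𝒱, h𝒱c, hs𝒱⟩ := hs {u | ∃ W : Opens X, P W ∧ (W : Set X) = u}
    (by rintro _ ⟨W, -, rfl⟩; exact W.isOpen)
    (fun x hx => by obtain ⟨W, hW, hxW⟩ := h x hx; exact ⟨W, ⟨W, hW, rfl⟩, hxW⟩)
  obtain ⟨x, hx⟩ := hne
  obtain ⟨u, hu, -⟩ := hs𝒱 hx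
  obtain ⟨f, rfl⟩ := h𝒱c.exists_eq_range ⟨u, hu⟩
  choose V hV hVf using fun n => h𝒱 (Set.mem_range_self n)
  refine ⟨V, hV, fun y hy => ?_⟩
  obtain ⟨_, ⟨n, rfl⟩, hyn⟩ := hs𝒱 hy
  exact Set.mem_iUnion.2 ⟨n, (hVf n).symm ▸ hyn⟩

section ShortExact

variable {R : Type u} [Ring R] {X : TopCat.{u}} {F' F F'' : TopCat.Sheaf (ModuleCat.{u} R) X}
  (α : F' ⟶ F) (β : F ⟶ F'')

theorem app_app_eq_zero
    (hcomp : ∀ x, LinearMap.range ((stalkFunctor (ModuleCat.{u} R) x).map α.hom).hom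
      ≤ LinearMap.ker ((stalkFunctor (ModuleCat.{u} R) x).map β.hom).hom)
    {V : Opens X} (s : ToType (F'.presheaf.obj (op V))) :
    β.hom.app (op V) (α.hom.app (op V) s) = 0 := by
  refine section_ext F'' V _ _ fun x hx => ?_
  rw [map_zero, ← stalkFunctor_map_germ_apply, ← stalkFunctor_map_germ_apply]
  exact hcomp x ⟨_, rfl⟩

theorem exists_app_eq_of_app_eq_zero
    (hinj : ∀ x, Function.Injective ((stalkFunctor (ModuleCat.{u} R) x).map α.hom))
    (hker : ∀ x, LinearMap.ker ((stalkFunctor (ModuleCat.{u} R) x).map β.hom).hom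
      ≤ LinearMap.range ((stalkFunctor (ModuleCat.{u} R) x).map α.hom).hom)
    {V : Opens X} (t : ToType (F.presheaf.obj (op V))) (ht : β.hom.app (op V) t = 0) :
    ∃ s, α.hom.app (op V) s = t := by
  refine F'.exists_app_eq_of_locally α
    (fun W => app_injective_of_stalkFunctor_map_injective α.hom W fun x _ => hinj x) t
    fun x hx => ?_
  have hkey : (stalkFunctor (ModuleCat.{u} R) x).map β.hom (F.presheaf.germ V x hx t) = 0 := by
    rw [stalkFunctor_map_germ_apply, ht, map_zero]; rfl
  obtain ⟨g, hg⟩ := hker x hkey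
  obtain ⟨W₀, hxW₀, s₀, rfl⟩ := F'.presheaf.exists_germ_eq g
  rw [stalkFunctor_map_germ_apply] at hg
  obtain ⟨W, hxW, iW₀, iV, heq⟩ := F.presheaf.germ_eq x hxW₀ hx _ _ hg
  refine ⟨W, hxW, iV.le, restrictOpen s₀ W iW₀.le, ?_⟩
  rw [map_restrict]
  exact heq

theorem exists_mem_basis_app_eq {𝒯 : Set (Opens X)} (h𝒯 : Opens.IsBasis 𝒯)
    (hsurj : ∀ x, Function.Surjective ((stalkFunctor (ModuleCat.{u} R) x).map β.hom))
    {U : Opens X} (s'' : ToType (F''.presheaf.obj (op U))) {x : X} (hx : x ∈ U) :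
    ∃ W ∈ 𝒯, x ∈ W ∧ ∃ (hWU : W ≤ U) (t : ToType (F.presheaf.obj (op W))),
      β.hom.app (op W) t = restrictOpen s'' W hWU := by
  obtain ⟨V, hVU, ⟨t, ht⟩, hxV⟩ := (isLocallySurjective_iff β.hom).1
    ((locally_surjective_iff_surjective_on_stalks β.hom).2 hsurj) U s'' x hx
  obtain ⟨W, hW𝒯, hxW, hWV⟩ := Opens.isBasis_iff_nbhd.1 h𝒯 hxV
  refine ⟨W, hW𝒯, hxW, hWV.trans hVU, restrictOpen t W hWV, ?_⟩
  rw [map_restrict, ht, restrict_restrict]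

theorem exists_app_eq_restrict_eq_of_le_sup
    (hcomp : ∀ x, LinearMap.range ((stalkFunctor (ModuleCat.{u} R) x).map α.hom).hom
      ≤ LinearMap.ker ((stalkFunctor (ModuleCat.{u} R) x).map β.hom).hom)
    (hinj : ∀ x, Function.Injective ((stalkFunctor (ModuleCat.{u} R) x).map α.hom))
    (hker : ∀ x, LinearMap.ker ((stalkFunctor (ModuleCat.{u} R) x).map β.hom).hom
      ≤ LinearMap.range ((stalkFunctor (ModuleCat.{u} R) x).map α.hom).hom)
    {A B W : Opens X} (hAW : A ≤ W) (hBW : B ≤ W) (hW : W ≤ A ⊔ B)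
    (hres : Function.Surjective (F'.presheaf.map (homOfLE (inf_le_right : A ⊓ B ≤ B)).op))
    (s'' : ToType (F''.presheaf.obj (op W)))
    (a : ToType (F.presheaf.obj (op A))) (ha : β.hom.app (op A) a = restrictOpen s'' A hAW)
    (b : ToType (F.presheaf.obj (op B))) (hb : β.hom.app (op B) b = restrictOpen s'' B hBW) :
    ∃ c, β.hom.app (op W) c = s'' ∧ restrictOpen c A hAW = a := by
  have hdiff : β.hom.app _ (a |_ (A ⊓ B) - b |_ (A ⊓ B)) = 0 := by
    rw [map_sub, map_restrict, map_restrict, ha, hb, restrict_restrict, restrict_restrict,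
      sub_self]
  obtain ⟨d, hd⟩ := exists_app_eq_of_app_eq_zero α β hinj hker _ hdiff
  obtain ⟨e, rfl⟩ := hres d
  have hb' : β.hom.app (op B) (b + α.hom.app (op B) e) = restrictOpen s'' B hBW := by
    rw [map_add, app_app_eq_zero α β hcomp, add_zero, hb]
  have hagree : a |_ (A ⊓ B) = (b + α.hom.app (op B) e) |_ (A ⊓ B) := by
    have hadd : (b + α.hom.app (op B) e) |_ (A ⊓ B)
        = b |_ (A ⊓ B) + (α.hom.app (op B) e) |_ (A ⊓ B) :=
      map_add _ _ _
    change α.hom.app _ (e |_ (A ⊓ B)) = _ at hd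
    rw [hadd, ← map_restrict, hd, add_sub_cancel]
  obtain ⟨c, hcA, hcB⟩ := F.exists_restrict_eq_of_sup a _ hagree
  refine ⟨restrictOpen c W hW, ?_, by rw [restrict_restrict, hcA]⟩
  apply F''.eq_of_locally_eq₂ (homOfLE hAW) (homOfLE hBW) hW
  · change restrictOpen _ _ hAW = restrictOpen _ _ hAW
    rw [← map_restrict, restrict_restrict, hcA, ha]
  · change restrictOpen _ _ hBW = restrictOpen _ _ hBW
    rw [← map_restrict, restrict_restrict, hcB, hb']

end ShortExact

section Flabby

variable {k : Type} [Field k] {X : TopCat.{0}} {𝒯 : Set (Opens X)}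
  {F' F F'' : TopCat.Sheaf (ModuleCat.{0} k) X} (α : F' ⟶ F) (β : F ⟶ F'')

theorem app_surjective_of_lindelofSet (h𝒯 : Opens.IsBasis 𝒯)
    (hunion : ∀ U ∈ 𝒯, ∀ V ∈ 𝒯, U ⊔ V ∈ 𝒯) (hinter : ∀ U ∈ 𝒯, ∀ V ∈ 𝒯, U ⊓ V ∈ 𝒯)
    (hcomp : ∀ x, LinearMap.range ((stalkFunctor (ModuleCat k) x).map α.hom).hom
      ≤ LinearMap.ker ((stalkFunctor (ModuleCat k) x).map β.hom).hom)
    (hinj : ∀ x, Function.Injective ((stalkFunctor (ModuleCat k) x).map α.hom))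
    (hker : ∀ x, LinearMap.ker ((stalkFunctor (ModuleCat k) x).map β.hom).hom
      ≤ LinearMap.range ((stalkFunctor (ModuleCat k) x).map α.hom).hom)
    (hsurj : ∀ x, Function.Surjective ((stalkFunctor (ModuleCat k) x).map β.hom))
    (hflabby : TFlabby 𝒯 F') {U : Opens X} (hU : LindelofSet (U : Set X)) :
    Function.Surjective (β.hom.app (op U)) := by
  intro s''
  by_cases hne : (U : Set X).Nonempty
  swap
  · exact ⟨0, F''.eq_of_eq_bot ((Opens.not_nonempty_iff_eq_bot U).1 hne) _ _⟩
  obtain ⟨V, hV, hcov⟩ := hU.exists_seq_cover hne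
    (P := fun W => W ∈ 𝒯 ∧ ∃ (hWU : W ≤ U) (t : ToType (F.presheaf.obj (op W))),
      β.hom.app (op W) t = restrictOpen s'' W hWU) fun x hx => by
    obtain ⟨W, hW𝒯, hxW, hWU, t, ht⟩ := exists_mem_basis_app_eq β h𝒯 hsurj s'' hx
    exact ⟨W, ⟨hW𝒯, hWU, t, ht⟩, hxW⟩
  choose hV𝒯 hVU t ht using hV
  have hpartial𝒯 : ∀ n, partialSups V n ∈ 𝒯 := by
    intro n
    induction n with
    | zero => simpa using hV𝒯 0
    | succ n ih => simpa using hunion _ ih _ (hV𝒯 (n + 1))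
  have hpartialU : ∀ n, partialSups V n ≤ U := fun n => partialSups_le _ _ _ fun m _ => hVU m
  have hcov' : U ≤ ⨆ n, partialSups V n := by
    rw [iSup_partialSups_eq]
    intro x hx
    simpa [Opens.mem_iSup] using hcov hx
  refine F.exists_app_eq_of_monotone β (partialSups V).monotone hpartialU hcov' s''
    ⟨restrictOpen (t 0) _ (partialSups_zero V).le, by rw [map_restrict, ht, restrict_restrict]⟩
    fun n g hg => ?_
  exact exists_app_eq_restrict_eq_of_le_sup α β hcomp hinj hker
    ((partialSups V).monotone n.le_succ) (le_partialSups V (n + 1))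
    (partialSups_add_one V n).le
    (hflabby _ (hV𝒯 _) _ (hinter _ (hpartial𝒯 n) _ (hV𝒯 _)) inf_le_right) _
    g (by rw [hg, restrict_restrict]) (t (n + 1)) (by rw [ht, restrict_restrict])

theorem TFlabby.of_app_surjective (hβ : ∀ V ∈ 𝒯, Function.Surjective (β.hom.app (op V)))
    (hF : TFlabby 𝒯 F) : TFlabby 𝒯 F'' := by
  intro U hU V hV hVU s''
  obtain ⟨t, rfl⟩ := hβ V hV s''
  obtain ⟨t', rfl⟩ := hF U hU V hV hVU t
  exact ⟨β.hom.app _ t', (map_restrict β.hom hVU t').symm⟩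

theorem TFlabby.of_tFlabby_of_app_surjective
    (hinj : ∀ x, Function.Injective ((stalkFunctor (ModuleCat k) x).map α.hom))
    (hker : ∀ x, LinearMap.ker ((stalkFunctor (ModuleCat k) x).map β.hom).hom
      ≤ LinearMap.range ((stalkFunctor (ModuleCat k) x).map α.hom).hom)
    (hβ : ∀ V ∈ 𝒯, Function.Surjective (β.hom.app (op V)))
    (hF' : TFlabby 𝒯 F') (hF'' : TFlabby 𝒯 F'') : TFlabby 𝒯 F := by
  intro U hU V hV hVU s
  obtain ⟨S'', hS''⟩ := hF'' U hU V hV hVU (β.hom.app _ s)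
  obtain ⟨T, rfl⟩ := hβ U hU S''
  obtain ⟨d, hd⟩ := exists_app_eq_of_app_eq_zero α β hinj hker (restrictOpen T V hVU - s)
    (by rw [map_sub, map_restrict]; exact sub_eq_zero.2 hS'')
  obtain ⟨e, rfl⟩ := hF' U hU V hV hVU d
  refine ⟨T - α.hom.app _ e, ?_⟩
  have hsub : restrictOpen (T - α.hom.app _ e) V hVU
      = restrictOpen T V hVU - restrictOpen (α.hom.app _ e) V hVU :=
    map_sub _ _ _
  change α.hom.app _ (restrictOpen e V hVU) = _ at hd
  change restrictOpen _ V hVU = s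
  rw [hsub, ← map_restrict, hd, sub_sub_cancel]

end Flabby

theorem stmt1 {k : Type} [Field k] {X : TopCat.{0}} (𝒯 : Set (Opens X))
    -- 𝒯 is a basis of the topology:
    (hbasis : ∀ U : Opens X, ∃ S ⊆ 𝒯, U = sSup S)
    -- every element of 𝒯 is Lindelöf:
    (hLind : ∀ U ∈ 𝒯, LindelofSet (U : Opens ↑X).carrier)
    -- 𝒯 is stable under finite unions and intersections:
    (hunion : ∀ U ∈ 𝒯, ∀ V ∈ 𝒯, U ⊔ V ∈ 𝒯)
    (hinter : ∀ U ∈ 𝒯, ∀ V ∈ 𝒯, U ⊓ V ∈ 𝒯)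
    -- a short exact sequence 0 → F' → F → F'' → 0 of sheaves of k-vector spaces:
    (F' F F'' : TopCat.Sheaf (ModuleCat.{0} k) X) (α : F' ⟶ F) (β : F ⟶ F'')
    (hinj : ∀ x : ↑X,
      Function.Injective ((TopCat.Presheaf.stalkFunctor (ModuleCat k) x).map α.hom))
    (hexact : ∀ x : ↑X,
      LinearMap.range ((TopCat.Presheaf.stalkFunctor (ModuleCat k) x).map α.hom).hom
        = LinearMap.ker ((TopCat.Presheaf.stalkFunctor (ModuleCat k) x).map β.hom).hom)
    (hsurj : ∀ x : ↑X,
      Function.Surjective ((TopCat.Presheaf.stalkFunctor (ModuleCat k) x).map β.hom))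
    -- F' is 𝒯-flabby:
    -- F' is 𝒯-flabby:
    (hflabby : TFlabby 𝒯 F') :
    TFlabby 𝒯 F ↔ TFlabby 𝒯 F'' := by
  have h𝒯 : Opens.IsBasis 𝒯 := Opens.isBasis_iff_cover.2 hbasis
  have hβ : ∀ V ∈ 𝒯, Function.Surjective (β.hom.app (op V)) := fun V hV =>
    app_surjective_of_lindelofSet α β h𝒯 hunion hinter (fun x => (hexact x).le) hinj
      (fun x => (hexact x).ge) hsurj hflabby (hLind V hV)
  exact ⟨TFlabby.of_app_surjective β hβ,
    TFlabby.of_tFlabby_of_app_surjective α β hinj (fun x => (hexact x).ge) hβ hflabby⟩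
end

section
/- Let X be a topological space, U an open Lindelöf subset of X, and F → G a surjective morphism of sheaves of abelian groups on X, with kernel K. Suppose that for every pair of open sets V ⊆ W contained in U, the restriction Γ(W;K) → Γ(V;K) is surjective (K is flabby relative to U). Then Γ(U;F) → Γ(U;G) is surjective. -/
/-!
For `g ∈ Γ(U; G)`, stalk surjectivity and the Lindelöf property give opens `V₀, V₁, …`
covering `U` on each of which `g` lifts. A lift on `W n = V₀ ∪ ⋯ ∪ Vₙ` is extended to
`W (n + 1)`: it differs from a lift on `Vₙ₊₁` over the overlap by a section of `K`, which by
relative flabbiness extends to `Vₙ₊₁`; correcting the lift on `Vₙ₊₁` by it makes the two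
agree, so they glue. The resulting compatible sequence of lifts glues to a lift on `U`.
-/

open CategoryTheory TopologicalSpace Opposite

open Limits TopCat.Presheaf
open scoped AlgebraicGeometry

universe u

theorem LindelofSet.exists_seq_subcover {X : Type} [TopologicalSpace X] {s : Set X}
    (hs : LindelofSet s) {𝒰 : Set (Opens X)} (hne : 𝒰.Nonempty)
    (hcover : ∀ x ∈ s, ∃ V ∈ 𝒰, x ∈ V) :
    ∃ V : ℕ → Opens X, (∀ n, V n ∈ 𝒰) ∧ s ⊆ ⋃ n, (V n : Set X) := by
  obtain ⟨𝒱, h𝒱𝒰, h𝒱, hs𝒱⟩ := hs (SetLike.coe '' 𝒰) (by rintro _ ⟨V, -, rfl⟩; exact V.isOpen)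
    fun x hx => by
      obtain ⟨V, hV, hxV⟩ := hcover x hx
      exact ⟨V, ⟨V, hV, rfl⟩, hxV⟩
  obtain ⟨V₀, hV₀⟩ := hne
  let 𝒲 : Set (Opens X) := insert V₀ (SetLike.coe ⁻¹' 𝒱 ∩ 𝒰)
  have h𝒲 : 𝒲.Countable :=
    ((h𝒱.preimage SetLike.coe_injective).mono Set.inter_subset_left).insert V₀
  obtain ⟨V, hV⟩ := h𝒲.exists_eq_range (Set.insert_nonempty _ _)
  refine ⟨V, fun n => ?_, fun x hx => ?_⟩
  · rcases (hV ▸ Set.mem_range_self n : V n ∈ 𝒲) with h | ⟨-, h⟩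
    exacts [h ▸ hV₀, h]
  · obtain ⟨_, hv, hxv⟩ := hs𝒱 hx
    obtain ⟨W, hW, rfl⟩ := h𝒱𝒰 hv
    obtain ⟨n, rfl⟩ : W ∈ Set.range V := hV ▸ Or.inr ⟨hv, hW⟩
    exact Set.mem_iUnion.mpr ⟨n, hxv⟩

namespace TopCat.Sheaf

variable {C : Type*} [Category* C] {FC : C → C → Type*} {CC : C → Type*}
variable [∀ X Y, FunLike (FC X Y) (CC X) (CC Y)] [ConcreteCategory C FC] {X : TopCat.{u}}

def IsFlasqueOn (K : X.Sheaf C) (U : Opens X) : Prop :=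
  ∀ (V W : Opens X) (h : V ≤ W), W ≤ U → Function.Surjective (K.presheaf.map (homOfLE h).op)

section Gluing

variable [HasLimitsOfSize.{u, u} C] [(CategoryTheory.forget C).ReflectsIsomorphisms]
variable [PreservesLimitsOfSize.{u, u} (CategoryTheory.forget C)]
variable (F : X.Sheaf C)

theorem subsingleton_obj_bot : Subsingleton (ToType (F.presheaf.obj (op ⊥))) :=
  ⟨fun s t => F.eq_of_locally_eq' (fun i : PEmpty.{u + 1} => ⊥) ⊥ (fun i => i.elim)
    (by simp) s t (fun i => i.elim)⟩

theorem exists_gluing_sup {A B D : Opens X} (hA : A ≤ D) (hB : B ≤ D) (hD : D ≤ A ⊔ B)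
    (sA : ToType (F.presheaf.obj (op A))) (sB : ToType (F.presheaf.obj (op B)))
    (h : sA |_ (A ⊓ B) = sB |_ (A ⊓ B)) :
    ∃ s : ToType (F.presheaf.obj (op D)), s |_ A = sA ∧ s |_ B = sB := by
  have h' : sB |_ (B ⊓ A) = sA |_ (B ⊓ A) := by
    rw [← restrict_restrict (inf_comm B A).le inf_le_right,
      ← restrict_restrict (inf_comm B A).le inf_le_left, h]
  let sf : ∀ b, ToType (F.presheaf.obj (op (cond b A B))) := fun b => match b with
    | true => sA
    | false => sB
  have hsf : IsCompatible F.presheaf _ sf := by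
    rintro (_ | _) (_ | _)
    exacts [rfl, h', h, rfl]
  obtain ⟨s, hs, -⟩ := F.existsUnique_gluing' _ D (fun b => homOfLE (by cases b <;> assumption))
    (sup_le_iff.mpr ⟨le_iSup _ true, le_iSup _ false⟩ |>.trans' hD) sf hsf
  exact ⟨s, hs true, hs false⟩

theorem exists_gluing_of_monotone {W : ℕ → Opens X} (hW : Monotone W) {D : Opens X}
    (hWD : ∀ n, W n ≤ D) (hD : D ≤ ⨆ n, W n) (s : ∀ n, ToType (F.presheaf.obj (op (W n))))
    (hs : ∀ n, restrictOpen (s (n + 1)) (W n) (hW n.le_succ) = s n) :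
    ∃ t : ToType (F.presheaf.obj (op D)), ∀ n, restrictOpen t (W n) (hWD n) = s n := by
  have hres : ∀ m n (h : m ≤ n), restrictOpen (s n) (W m) (hW h) = s m := by
    intro m n h
    induction n, h using Nat.le_induction with
    | base => exact restrict_self _
    | succ n h ih => rw [← restrict_restrict (hW h) (hW n.le_succ), hs, ih]
  have hcompat : IsCompatible F.presheaf W s := by
    intro i j
    show s i |_ (W i ⊓ W j) = s j |_ (W i ⊓ W j)
    rcases le_total i j with h | h
    · rw [← hres i j h, restrict_restrict]
    · rw [← hres j i h, restrict_restrict]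
  obtain ⟨t, ht, -⟩ := F.existsUnique_gluing' W D (fun n => homOfLE (hWD n)) hD s hcompat
  exact ⟨t, ht⟩

theorem exists_forall_of_monotone_of_extend {W : ℕ → Opens X} (hW : Monotone W) {D : Opens X}
    (hWD : ∀ n, W n ≤ D) (hD : D ≤ ⨆ n, W n) (P : ∀ n, ToType (F.presheaf.obj (op (W n))) → Prop)
    (h₀ : ∃ s, P 0 s)
    (hstep : ∀ n s, P n s → ∃ s', P (n + 1) s' ∧ restrictOpen s' (W n) (hW n.le_succ) = s) :
    ∃ t : ToType (F.presheaf.obj (op D)), ∀ n, P n (restrictOpen t (W n) (hWD n)) := by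
  choose s₀ hs₀ using h₀
  choose next hnext hres using hstep
  let s : ∀ n, {s // P n s} := fun n => Nat.rec ⟨s₀, hs₀⟩ (fun n p => ⟨_, hnext n p.1 p.2⟩) n
  obtain ⟨t, ht⟩ := F.exists_gluing_of_monotone hW hWD hD (fun n => (s n).1)
    fun n => hres n _ (s n).2
  exact ⟨t, fun n => ht n ▸ (s n).2⟩

end Gluing

variable {K F G : X.Sheaf AddCommGrpCat.{u}} (ι : K ⟶ F) (φ : F ⟶ G)

theorem exists_lift_extend_of_le_sup
    (hker : ∀ (W : Opens X) (s : F.presheaf.obj (op W)),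
      φ.hom.app (op W) s = 0 ↔ ∃ t, ι.hom.app (op W) t = s)
    {A B D : Opens X} (hA : A ≤ D) (hB : B ≤ D) (hD : D ≤ A ⊔ B)
    (hK : Function.Surjective (K.presheaf.map (homOfLE (inf_le_right : A ⊓ B ≤ B)).op))
    (g : G.presheaf.obj (op D)) (s : F.presheaf.obj (op A)) (hs : φ.hom.app (op A) s = g |_ A)
    (f : F.presheaf.obj (op B)) (hf : φ.hom.app (op B) f = g |_ B) :
    ∃ t : F.presheaf.obj (op D), φ.hom.app (op D) t = g ∧ t |_ A = s := by
  have hdiff : φ.hom.app _ (s |_ (A ⊓ B) - f |_ (A ⊓ B)) = 0 := by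
    rw [map_sub, map_restrict, map_restrict, hs, hf, restrict_restrict, restrict_restrict,
      sub_self]
  obtain ⟨k₀, hk⟩ := (hker _ _).mp hdiff
  obtain ⟨k, rfl⟩ := hK k₀
  have hιk : φ.hom.app (op B) (ι.hom.app (op B) k) = 0 := (hker B _).mpr ⟨k, rfl⟩
  have hagree : s |_ (A ⊓ B) = (f + ι.hom.app (op B) k) |_ (A ⊓ B) := by
    replace hk : ι.hom.app _ (k |_ (A ⊓ B)) = s |_ (A ⊓ B) - f |_ (A ⊓ B) := hk
    rw [restrict_sum, ← map_restrict, hk, add_sub_cancel]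
  obtain ⟨t, htA, htB⟩ := F.exists_gluing_sup hA hB hD _ _ hagree
  refine ⟨t, G.eq_of_locally_eq₂ (homOfLE hA) (homOfLE hB) hD _ _ ?_ ?_, htA⟩
  · exact (map_restrict _ hA t).symm.trans (htA ▸ hs)
  · refine (map_restrict _ hB t).symm.trans ?_
    rw [htB, map_add, hιk, add_zero, hf]
    rfl

theorem exists_lift_of_seq_cover
    (hker : ∀ (W : Opens X) (s : F.presheaf.obj (op W)),
      φ.hom.app (op W) s = 0 ↔ ∃ t, ι.hom.app (op W) t = s)
    {U : Opens X} (hK : K.IsFlasqueOn U) {V : ℕ → Opens X} (hVU : ∀ n, V n ≤ U)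
    (hcover : U ≤ ⨆ n, V n) (g : G.presheaf.obj (op U))
    (hlift : ∀ n, ∃ f, φ.hom.app (op (V n)) f = restrictOpen g (V n) (hVU n)) :
    ∃ f, φ.hom.app (op U) f = g := by
  let W := partialSups V
  have hWU n : W n ≤ U := partialSups_le _ _ _ fun m _ => hVU m
  have hcoverW : U ≤ ⨆ n, W n := hcover.trans (iSup_partialSups_eq V).ge
  have h₀ : ∃ s, φ.hom.app (op (W 0)) s = restrictOpen g (W 0) (hWU 0) := by
    obtain ⟨f, hf⟩ := hlift 0
    exact ⟨restrictOpen f (W 0) (partialSups_zero V).le, by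
      rw [map_restrict, hf, restrict_restrict]⟩
  have hstep n s (hs : φ.hom.app (op (W n)) s = restrictOpen g (W n) (hWU n)) :
      ∃ s', φ.hom.app (op (W (n + 1))) s' = restrictOpen g (W (n + 1)) (hWU (n + 1)) ∧
        restrictOpen s' (W n) (W.monotone n.le_succ) = s := by
    obtain ⟨f, hf⟩ := hlift (n + 1)
    refine exists_lift_extend_of_le_sup ι φ hker (W.monotone n.le_succ) (le_partialSups V (n + 1))
      (partialSups_succ V n).le (hK _ _ _ (hVU _)) _ s ?_ f ?_
    · rwa [restrict_restrict]
    · rwa [restrict_restrict]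
  obtain ⟨t, ht⟩ := F.exists_forall_of_monotone_of_extend W.monotone hWU hcoverW _ h₀ hstep
  refine ⟨t, G.eq_of_locally_eq' W U (fun n => homOfLE (hWU n)) hcoverW _ _ fun n => ?_⟩
  exact (map_restrict _ (hWU n) t).symm.trans (ht n)

end TopCat.Sheaf

theorem stmt2_general {X : TopCat.{0}}
    (K F G : TopCat.Sheaf AddCommGrpCat.{0} X) (ι : K ⟶ F) (φ : F ⟶ G)
    -- φ is surjective (on stalks):
    (hsurj : ∀ x : ↑X,
      Function.Surjective ((TopCat.Presheaf.stalkFunctor AddCommGrpCat x).map φ.hom))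
    -- K is the kernel of φ (kernels of sheaf morphisms are computed sectionwise):
    (hker : ∀ (W : Opens X) (s : F.val.obj (op W)),
      φ.hom.app (op W) s = 0 ↔ ∃ t, ι.hom.app (op W) t = s)
    -- U is an open Lindelöf subset:
    (U : Opens X) (hU : LindelofSet U.carrier)
    -- K is flabby relative to U:
    (hflabby : ∀ (V W : Opens X) (h : V ≤ W), W ≤ U →
      Function.Surjective (K.val.map (homOfLE h).op)) :
    Function.Surjective (φ.hom.app (op U)) := by
  intro g
  have hloc := (isLocallySurjective_iff φ.hom).mp
    ((locally_surjective_iff_surjective_on_stalks φ.hom).mpr hsurj) U g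
  obtain ⟨V, hV, hcover⟩ := hU.exists_seq_subcover
    (𝒰 := {V | ∃ h : V ≤ U, ∃ f, φ.hom.app (op V) f = restrictOpen g V h})
    ⟨⊥, bot_le, 0, G.subsingleton_obj_bot.elim _ _⟩
    fun x hx => by
      obtain ⟨V, hVU, hf, hxV⟩ := hloc x hx
      exact ⟨V, ⟨hVU, hf⟩, hxV⟩
  choose hVU hlift using hV
  exact TopCat.Sheaf.exists_lift_of_seq_cover ι φ hker hflabby hVU
    (fun x hx => by simpa using hcover hx) g hlift

theorem stmt2 {X : TopCat.{0}}
    (K F G : TopCat.Sheaf AddCommGrpCat.{0} X) (ι : K ⟶ F) (φ : F ⟶ G)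
    -- φ is surjective (on stalks):
    (hsurj : ∀ x : ↑X,
      Function.Surjective ((TopCat.Presheaf.stalkFunctor AddCommGrpCat x).map φ.hom))
    -- K is the kernel of φ (kernels of sheaf morphisms are computed sectionwise):
    (hker_inj : ∀ W : Opens X, Function.Injective (ι.hom.app (op W)))
    (hker : ∀ (W : Opens X) (s : F.val.obj (op W)),
      φ.hom.app (op W) s = 0 ↔ ∃ t, ι.hom.app (op W) t = s)
    -- U is an open Lindelöf subset:
    (U : Opens X) (hU : LindelofSet U.carrier)
    -- K is flabby relative to U:
    (hflabby : ∀ (V W : Opens X) (h : V ≤ W), W ≤ U →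
      Function.Surjective (K.val.map (homOfLE h).op)) :
    Function.Surjective (φ.hom.app (op U)) :=
  stmt2_general K F G ι φ hsurj hker U hU hflabby
end
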